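/- For every natural number K ≥ 1, the function x ↦ x·(1 − (1 − 1/x)^K) is monotone nondecreasing on the interval [1, ∞); that is, for all reals 1 ≤ x ≤ y, x·(1 − (1 − 1/x)^K) ≤ y·(1 − (1 − 1/y)^K). Consequently, for fixed K the multicast gain K/(F·(1 − (1 − 1/F)^K)) is nonincreasing in F. -/
import Mathlib

lemma geom_rewrite (K : ℕ) (x : ℝ) (hx : 1 ≤ x) :
    x * (1 - (1 - 1 / x) ^ K) = ∑ i ∈ Finset.range K, (1 - 1 / x) ^ i := by
  have hx0 : x ≠ 0 := by linarith
  have h := geom_sum_mul (1 - 1 / x) K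
  have hxi : x * (1 / x) = 1 := by field_simp
  linear_combination x * h + (∑ i ∈ Finset.range K, (1 - 1/x)^i) * hxi

/-- For `K ≥ 1`, the map `x ↦ x * (1 - (1 - 1/x)^K)` is monotone
nondecreasing on `[1, ∞)`; consequently, for fixed `K` the multicast gain
`K / (x * (1 - (1 - 1/x)^K))` is nonincreasing in `x` on `[1, ∞)`. -/
theorem stmt_4 (K : ℕ) (hK : 1 ≤ K) :
    (∀ x y : ℝ, 1 ≤ x → x ≤ y →
        x * (1 - (1 - 1 / x) ^ K) ≤ y * (1 - (1 - 1 / y) ^ K))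
    ∧ (∀ x y : ℝ, 1 ≤ x → x ≤ y →
        (K : ℝ) / (y * (1 - (1 - 1 / y) ^ K)) ≤ (K : ℝ) / (x * (1 - (1 - 1 / x) ^ K))) := by
  have mono : ∀ x y : ℝ, 1 ≤ x → x ≤ y →
      x * (1 - (1 - 1 / x) ^ K) ≤ y * (1 - (1 - 1 / y) ^ K) := by
    intro x y hx hxy
    have hy : 1 ≤ y := le_trans hx hxy
    rw [geom_rewrite K x hx, geom_rewrite K y hy]
    apply Finset.sum_le_sum
    intro i _
    have h0 : (0:ℝ) ≤ 1 - 1 / x := by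
      have : 1 / x ≤ 1 := by
        rw [div_le_one (by linarith)]; linarith
      linarith
    have h1 : 1 - 1 / x ≤ 1 - 1 / y := by
      have : 1 / y ≤ 1 / x := one_div_le_one_div_of_le (by linarith) hxy
      linarith
    exact pow_le_pow_left₀ h0 h1 i
  have pos : ∀ x : ℝ, 1 ≤ x → 0 < x * (1 - (1 - 1 / x) ^ K) := by
    intro x hx
    rw [geom_rewrite K x hx]
    apply Finset.sum_pos'
    · intro i _
      have : 1 / x ≤ 1 := by rw [div_le_one (by linarith)]; linarith
      exact pow_nonneg (by linarith) i
    · exact ⟨0, Finset.mem_range.mpr (by omega), by simp⟩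
  refine ⟨mono, fun x y hx hxy => ?_⟩
  exact div_le_div_of_nonneg_left (by positivity) (pos x hx) (mono x y hx hxy)
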